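/- arXiv:1906.08473 — 2 statements merged into one kernel-verified Lean document; each statement's English description precedes it below -/
import Mathlib

section
/- Consider SGD on a twice-differentiable loss $\ell(z;\theta)$ with $\lambda I \prec \nabla_\theta^2 \ell(z;\theta) \prec \Lambda I$ for all $z,\theta$ ($0 < \lambda < \Lambda$), learning rates $\eta_s \le 1/\Lambda$, and counterfactual SGD omitting instance $z_j$ (used at step $\pi(j)$). Define $h_j(a) = \frac{\eta_{\pi(j)}}{|S_{\pi(j)}|} \prod_{s=\pi(j)+1}^{T-1}(1-\eta_s a)\,\|g(z_j;\theta^{[\pi(j)]})\|$. Then the true SGD-influence satisfies $h_j(\Lambda) \le \|\theta_{-j}^{[T]} - \theta^{[T]}\| \le h_j(\lambda)$. -/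
/-!
Away from step `π` both runs apply the same minibatch step `w ↦ w - (η/|S|) Σᵢ ∇ℓ(zᵢ; w)`. Its
Jacobian `I - (η/|S|) Σᵢ ∇²ℓ(zᵢ; w)` is symmetric with quadratic form between `(1 - ηΛ)‖v‖²` and
`(1 - ηλ)‖v‖²`, and `η ≤ 1/Λ` makes the lower end nonnegative. Hence the step multiplies distances
by a factor in `[1 - ηΛ, 1 - ηλ]`: the upper factor bounds the operator norm of the Jacobian (for a
symmetric operator it is the supremum of the Rayleigh quotient), the lower one comes from
integrating the quadratic form along the segment. Up to step `π` the runs coincide, right after it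
they differ by exactly `(η/|S|) ∇ℓ(z_j; θ)`, and iterating the two-sided bound gives the products.
-/

open scoped RealInnerProductSpace
open Finset

/-- Hessian of `f` as the derivative of the gradient. -/
noncomputable def hess {p : ℕ} (f : EuclideanSpace ℝ (Fin p) → ℝ)
    (θ : EuclideanSpace ℝ (Fin p)) :
    EuclideanSpace ℝ (Fin p) →L[ℝ] EuclideanSpace ℝ (Fin p) :=
  fderiv ℝ (gradient f) θ

theorem prod_Ico_mul_le_of_mul_le {u c : ℕ → ℝ} {m n : ℕ} (hmn : m ≤ n)
    (hc : ∀ k ∈ Ico m n, 0 ≤ c k) (h : ∀ k ∈ Ico m n, c k * u k ≤ u (k + 1)) :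
    (∏ k ∈ Ico m n, c k) * u m ≤ u n := by
  induction n, hmn using Nat.le_induction with
  | base => simp
  | succ n hmn ih =>
    have hn : n ∈ Ico m (n + 1) := by simp [hmn]
    have hsub : Ico m n ⊆ Ico m (n + 1) := Ico_subset_Ico_right n.le_succ
    calc (∏ k ∈ Ico m (n + 1), c k) * u m = c n * ((∏ k ∈ Ico m n, c k) * u m) := by
          rw [prod_Ico_succ_top hmn]; ring
      _ ≤ c n * u n := mul_le_mul_of_nonneg_left
          (ih (fun k hk => hc k (hsub hk)) (fun k hk => h k (hsub hk))) (hc n hn)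
      _ ≤ u (n + 1) := h n hn

theorem le_prod_Ico_mul_of_le_mul {u c : ℕ → ℝ} {m n : ℕ} (hmn : m ≤ n)
    (hc : ∀ k ∈ Ico m n, 0 ≤ c k) (h : ∀ k ∈ Ico m n, u (k + 1) ≤ c k * u k) :
    u n ≤ (∏ k ∈ Ico m n, c k) * u m := by
  induction n, hmn using Nat.le_induction with
  | base => simp
  | succ n hmn ih =>
    have hn : n ∈ Ico m (n + 1) := by simp [hmn]
    have hsub : Ico m n ⊆ Ico m (n + 1) := Ico_subset_Ico_right n.le_succ
    calc u (n + 1) ≤ c n * u n := h n hn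
      _ ≤ c n * ((∏ k ∈ Ico m n, c k) * u m) := mul_le_mul_of_nonneg_left
          (ih (fun k hk => hc k (hsub hk)) (fun k hk => h k (hsub hk))) (hc n hn)
      _ = (∏ k ∈ Ico m (n + 1), c k) * u m := by rw [prod_Ico_succ_top hmn]; ring

section InnerProductSpace

variable {E : Type*} [NormedAddCommGroup E] [InnerProductSpace ℝ E]

theorem LinearMap.IsSymmetric.opNorm_le_of_inner_apply_le {T : E →L[ℝ] E}
    (hT : (T : E →ₗ[ℝ] E).IsSymmetric) {b : ℝ} (hb : 0 ≤ b)
    (hT₀ : ∀ v, 0 ≤ ⟪v, T v⟫) (hTb : ∀ v, ⟪v, T v⟫ ≤ b * ‖v‖ ^ 2) : ‖T‖ ≤ b := by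
  rw [T.norm_eq_iSup_rayleighQuotient hT]
  refine ciSup_le fun v => ?_
  rcases eq_or_ne v 0 with rfl | hv
  · simpa using hb
  have hv2 : 0 < ‖v‖ ^ 2 := by positivity
  rw [ContinuousLinearMap.rayleighQuotient, ContinuousLinearMap.reApplyInnerSelf_apply,
    RCLike.re_to_real, real_inner_comm, abs_div, abs_of_nonneg (hT₀ v), abs_of_pos hv2,
    div_le_iff₀ hv2]
  exact hTb v

theorem mul_norm_sub_le_norm_sub_of_le_inner_fderiv {F : E → E} (hF : Differentiable ℝ F)
    {a : ℝ} (ha : ∀ w v, a * ‖v‖ ^ 2 ≤ ⟪v, fderiv ℝ F w v⟫) (x y : E) :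
    a * ‖y - x‖ ≤ ‖F y - F x‖ := by
  set d := y - x
  let φ : ℝ → ℝ := fun t => ⟪d, F (x + t • d)⟫
  have hφ : ∀ t, HasDerivAt φ ⟪d, fderiv ℝ F (x + t • d) d⟫ t := by
    intro t
    have hpath : HasDerivAt (fun t : ℝ => x + t • d) d t := by
      simpa using ((hasDerivAt_id t).smul_const d).const_add x
    simpa using (hasDerivAt_const t d).inner ℝ ((hF _).hasFDerivAt.comp_hasDerivAt t hpath)
  have hmono : a * ‖d‖ ^ 2 * (1 - 0) ≤ φ 1 - φ 0 :=
    mul_sub_le_image_sub_of_le_deriv (fun t => (hφ t).differentiableAt)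
      (fun t => (hφ t).deriv ▸ ha _ d) zero_le_one
  have hinner : a * ‖d‖ ^ 2 ≤ ‖d‖ * ‖F y - F x‖ := by
    have : φ 1 - φ 0 = ⟪d, F y - F x⟫ := by simp [φ, d, inner_sub_right]
    linarith [real_inner_le_norm d (F y - F x)]
  rcases (norm_nonneg d).eq_or_lt with hd | hd
  · rw [← hd, mul_zero]; exact norm_nonneg _
  · nlinarith
  
theorem norm_sub_le_of_isSymmetric_fderiv {F : E → E} (hF : Differentiable ℝ F)
    (hsymm : ∀ w, (fderiv ℝ F w : E →ₗ[ℝ] E).IsSymmetric) {b : ℝ} (hb : 0 ≤ b)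
    (h₀ : ∀ w v, 0 ≤ ⟪v, fderiv ℝ F w v⟫) (hFb : ∀ w v, ⟪v, fderiv ℝ F w v⟫ ≤ b * ‖v‖ ^ 2)
    (x y : E) : ‖F y - F x‖ ≤ b * ‖y - x‖ :=
  convex_univ.norm_image_sub_le_of_norm_fderiv_le (fun w _ => hF w)
    (fun w _ => (hsymm w).opNorm_le_of_inner_apply_le hb (h₀ w) (hFb w)) trivial trivial

variable [CompleteSpace E]

theorem inner_fderiv_gradient_apply (f : E → ℝ) (x v w : E) :
    ⟪fderiv ℝ (gradient f) x v, w⟫ = fderiv ℝ (fderiv ℝ f) x v w := by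
  change ⟪fderiv ℝ ((InnerProductSpace.toDual ℝ E).symm ∘ fderiv ℝ f) x v, w⟫ = _
  rw [LinearIsometryEquiv.comp_fderiv]
  exact InnerProductSpace.toDual_symm_apply

theorem ContDiffAt.isSymmetric_fderiv_gradient {f : E → ℝ} {x : E} (hf : ContDiffAt ℝ 2 f x) :
    (fderiv ℝ (gradient f) x : E →ₗ[ℝ] E).IsSymmetric := fun v w => by
  rw [ContinuousLinearMap.coe_coe, inner_fderiv_gradient_apply, real_inner_comm,
    inner_fderiv_gradient_apply]
  exact (hf.isSymmSndFDerivAt (by simp)).eq v w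

theorem ContDiff.differentiable_gradient {f : E → ℝ} (hf : ContDiff ℝ 2 f) :
    Differentiable ℝ (gradient f) :=
  ((InnerProductSpace.toDual ℝ E).symm.contDiff.comp
    (hf.fderiv_right (m := 1) (by norm_num))).differentiable one_ne_zero

variable {ι : Type*}

noncomputable def sgdStep (f : ι → E → ℝ) (s : Finset ι) (η : ℝ) (w : E) : E :=
  w - (η / #s) • ∑ i ∈ s, gradient (f i) w

theorem hasFDerivAt_sgdStep {f : ι → E → ℝ} (hf : ∀ i, ContDiff ℝ 2 (f i)) (s : Finset ι)
    (η : ℝ) (w : E) :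
    HasFDerivAt (sgdStep f s η)
      (ContinuousLinearMap.id ℝ E - (η / #s) • ∑ i ∈ s, fderiv ℝ (gradient (f i)) w) w :=
  (hasFDerivAt_id w).sub
    ((HasFDerivAt.fun_sum fun i _ => ((hf i).differentiable_gradient w).hasFDerivAt).const_smul _)

theorem sgdStep_norm_sub_bounds {f : ι → E → ℝ} (hf : ∀ i, ContDiff ℝ 2 (f i)) {lam Lam : ℝ}
    (hH : ∀ i w v, lam * ‖v‖ ^ 2 ≤ ⟪v, fderiv ℝ (gradient (f i)) w v⟫ ∧
      ⟪v, fderiv ℝ (gradient (f i)) w v⟫ ≤ Lam * ‖v‖ ^ 2)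
    (hlamLam : lam ≤ Lam) {s : Finset ι} (hs : s.Nonempty) {η : ℝ} (hη : 0 ≤ η)
    (hηLam : η * Lam ≤ 1) (x y : E) :
    (1 - η * Lam) * ‖y - x‖ ≤ ‖sgdStep f s η y - sgdStep f s η x‖ ∧
      ‖sgdStep f s η y - sgdStep f s η x‖ ≤ (1 - η * lam) * ‖y - x‖ := by
  have hD w := (hasFDerivAt_sgdStep hf s η w).fderiv
  have hdiff : Differentiable ℝ (sgdStep f s η) :=
    fun w => (hasFDerivAt_sgdStep hf s η w).differentiableAt
  have hcard : (0 : ℝ) < #s := by exact_mod_cast hs.card_pos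
  have hquad : ∀ w v, (1 - η * Lam) * ‖v‖ ^ 2 ≤ ⟪v, fderiv ℝ (sgdStep f s η) w v⟫ ∧
      ⟪v, fderiv ℝ (sgdStep f s η) w v⟫ ≤ (1 - η * lam) * ‖v‖ ^ 2 := by
    intro w v
    have hsum_le := sum_le_card_nsmul s _ _ fun i _ => (hH i w v).2
    have hsum_ge := card_nsmul_le_sum s _ _ fun i _ => (hH i w v).1
    rw [nsmul_eq_mul] at hsum_le hsum_ge
    have hform : ⟪v, fderiv ℝ (sgdStep f s η) w v⟫ =
        ‖v‖ ^ 2 - η / #s * ∑ i ∈ s, ⟪v, fderiv ℝ (gradient (f i)) w v⟫ := by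
      simp [hD, inner_sub_right, inner_smul_right, inner_sum]
    have hscale : ∀ c, η / #s * (#s * c) = η * c := fun c => by field_simp
    have hηs : 0 ≤ η / #s := div_nonneg hη hcard.le
    rw [hform]
    constructor
    · linarith [mul_le_mul_of_nonneg_left hsum_le hηs, hscale (Lam * ‖v‖ ^ 2)]
    · linarith [mul_le_mul_of_nonneg_left hsum_ge hηs, hscale (lam * ‖v‖ ^ 2)]
  have hsymm : ∀ w, (fderiv ℝ (sgdStep f s η) w : E →ₗ[ℝ] E).IsSymmetric := by
    intro w
    rw [hD, ContinuousLinearMap.toLinearMap_sub, ContinuousLinearMap.toLinearMap_smul,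
      ContinuousLinearMap.toLinearMap_sum]
    exact LinearMap.IsSymmetric.id.sub ((LinearMap.isSymmetric_sum s fun i _ =>
      (hf i).contDiffAt.isSymmetric_fderiv_gradient).smul (by simp))
  have hηlam : η * lam ≤ η * Lam := mul_le_mul_of_nonneg_left hlamLam hη
  refine ⟨mul_norm_sub_le_norm_sub_of_le_inner_fderiv hdiff (fun w v => (hquad w v).1) x y,
    norm_sub_le_of_isSymmetric_fderiv hdiff hsymm (by linarith) (fun w v => ?_)
      (fun w v => (hquad w v).2) x y⟩
  exact (mul_nonneg (by linarith) (sq_nonneg ‖v‖)).trans (hquad w v).1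

section Trajectory

variable [DecidableEq ι] {f : ι → E → ℝ} {S : ℕ → Finset ι} {η : ℕ → ℝ} {θ θc : ℕ → E} {j : ι}

theorem counterfactual_succ_eq_sgdStep {t : ℕ}
    (hCF : ∀ t, θc (t + 1) =
      θc t - (η t / #(S t)) • ∑ i ∈ (S t).erase j, gradient (f i) (θc t))
    (hj : j ∉ S t) : θc (t + 1) = sgdStep f (S t) (η t) (θc t) := by
  rw [hCF, erase_eq_of_notMem hj, sgdStep]

theorem counterfactual_sub_succ_eq_of_one_epoch {π : ℕ}
    (hSGD : ∀ t, θ (t + 1) = sgdStep f (S t) (η t) (θ t)) (hinit : θc 0 = θ 0)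
    (hCF : ∀ t, θc (t + 1) =
      θc t - (η t / #(S t)) • ∑ i ∈ (S t).erase j, gradient (f i) (θc t))
    (honeepoch : ∀ t, j ∈ S t ↔ t = π) :
    θc (π + 1) - θ (π + 1) = (η π / #(S π)) • gradient (f j) (θ π) := by
  have hagree : ∀ t ≤ π, θc t = θ t := by
    intro t
    induction t with
    | zero => exact fun _ => hinit
    | succ t ih =>
      intro ht
      rw [counterfactual_succ_eq_sgdStep hCF (mt (honeepoch t).1 (by omega)), hSGD, ih (by omega)]
  rw [hCF, hSGD, hagree π le_rfl, sum_erase_eq_sub ((honeepoch π).2 rfl), sgdStep, smul_sub]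
  abel

end Trajectory

end InnerProductSpace

theorem sgd_influence_norm_bound_general {p : ℕ} {Z : Type*}
    (ℓ : Z → EuclideanSpace ℝ (Fin p) → ℝ) (lam Lam : ℝ)
    (hlamLam : lam < Lam)
    (hsmooth : ∀ z, ContDiff ℝ 2 (ℓ z))
    (hHess : ∀ z θ₀ (v : EuclideanSpace ℝ (Fin p)), v ≠ 0 →
      lam * ‖v‖ ^ 2 < ⟪v, hess (ℓ z) θ₀ v⟫ ∧ ⟪v, hess (ℓ z) θ₀ v⟫ < Lam * ‖v‖ ^ 2)
    (N T : ℕ) (z : Fin N → Z) (S : ℕ → Finset (Fin N)) (η : ℕ → ℝ)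
    (hS : ∀ t, (S t).Nonempty)
    (hη : ∀ s, 0 < η s ∧ η s ≤ 1 / Lam)
    (θ θc : ℕ → EuclideanSpace ℝ (Fin p)) (j : Fin N) (π : ℕ)
    (hπT : π < T)
    (honeepoch : ∀ t, j ∈ S t ↔ t = π)
    (hSGD : ∀ t, θ (t + 1) =
      θ t - (η t / (S t).card) • ∑ i ∈ S t, gradient (ℓ (z i)) (θ t))
    (hinit : θc 0 = θ 0)
    (hCF : ∀ t, θc (t + 1) =
      θc t - (η t / (S t).card) • ∑ i ∈ (S t).erase j, gradient (ℓ (z i)) (θc t)) :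
    (η π / (S π).card) * (∏ s ∈ Finset.Ioo π T, (1 - η s * Lam)) *
        ‖gradient (ℓ (z j)) (θ π)‖ ≤ ‖θc T - θ T‖ ∧
    ‖θc T - θ T‖ ≤
      (η π / (S π).card) * (∏ s ∈ Finset.Ioo π T, (1 - η s * lam)) *
        ‖gradient (ℓ (z j)) (θ π)‖ := by
  have hLam : 0 < Lam := one_div_pos.mp ((hη 0).1.trans_le (hη 0).2)
  have hηLam s : η s * Lam ≤ 1 := (le_div_iff₀ hLam).mp (hη s).2
  have hfactor s : 0 ≤ 1 - η s * Lam ∧ 0 ≤ 1 - η s * lam :=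
    ⟨by linarith [hηLam s], by nlinarith [hηLam s, (hη s).1]⟩
  have hH z w (v : EuclideanSpace ℝ (Fin p)) :
      lam * ‖v‖ ^ 2 ≤ ⟪v, hess (ℓ z) w v⟫ ∧ ⟪v, hess (ℓ z) w v⟫ ≤ Lam * ‖v‖ ^ 2 := by
    rcases eq_or_ne v 0 with rfl | hv
    · simp
    · exact ⟨(hHess z w v hv).1.le, (hHess z w v hv).2.le⟩
  have hstep : ∀ t ∈ Ico (π + 1) T,
      (1 - η t * Lam) * ‖θc t - θ t‖ ≤ ‖θc (t + 1) - θ (t + 1)‖ ∧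
        ‖θc (t + 1) - θ (t + 1)‖ ≤ (1 - η t * lam) * ‖θc t - θ t‖ := by
    intro t ht
    rw [counterfactual_succ_eq_sgdStep hCF (mt (honeepoch t).1 (by simp at ht; omega)), hSGD]
    exact sgdStep_norm_sub_bounds (fun i => hsmooth (z i)) (fun i => hH (z i)) hlamLam.le (hS t)
      (hη t).1.le (hηLam t) (θ t) (θc t)
  have hfirst : ‖θc (π + 1) - θ (π + 1)‖ = η π / #(S π) * ‖gradient (ℓ (z j)) (θ π)‖ := by
    rw [counterfactual_sub_succ_eq_of_one_epoch hSGD hinit hCF honeepoch, norm_smul,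
      Real.norm_of_nonneg (div_nonneg (hη π).1.le (Nat.cast_nonneg _))]
  rw [← Ico_add_one_left_eq_Ioo]
  constructor
  · calc _ = (∏ s ∈ Ico (π + 1) T, (1 - η s * Lam)) * ‖θc (π + 1) - θ (π + 1)‖ := by
          rw [hfirst]; ring
      _ ≤ ‖θc T - θ T‖ := prod_Ico_mul_le_of_mul_le (u := fun t => ‖θc t - θ t‖) hπT
          (fun s _ => (hfactor s).1) fun t ht => (hstep t ht).1
  · calc _ ≤ (∏ s ∈ Ico (π + 1) T, (1 - η s * lam)) * ‖θc (π + 1) - θ (π + 1)‖ :=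
          le_prod_Ico_mul_of_le_mul (u := fun t => ‖θc t - θ t‖) hπT
            (fun s _ => (hfactor s).2) fun t ht => (hstep t ht).2
      _ = _ := by rw [hfirst]; ring

/-- Lemma 1, inequality (5): two-sided bound on the norm of the true SGD-influence. -/
theorem sgd_influence_norm_bound {p : ℕ} {Z : Type*}
    (ℓ : Z → EuclideanSpace ℝ (Fin p) → ℝ) (lam Lam : ℝ)
    (hlam : 0 < lam) (hlamLam : lam < Lam)
    (hsmooth : ∀ z, ContDiff ℝ 2 (ℓ z))
    (hHess : ∀ z θ₀ (v : EuclideanSpace ℝ (Fin p)), v ≠ 0 →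
      lam * ‖v‖ ^ 2 < ⟪v, hess (ℓ z) θ₀ v⟫ ∧ ⟪v, hess (ℓ z) θ₀ v⟫ < Lam * ‖v‖ ^ 2)
    (N T : ℕ) (z : Fin N → Z) (S : ℕ → Finset (Fin N)) (η : ℕ → ℝ)
    (hS : ∀ t, (S t).Nonempty)
    (hη : ∀ s, 0 < η s ∧ η s ≤ 1 / Lam)
    (θ θc : ℕ → EuclideanSpace ℝ (Fin p)) (j : Fin N) (π : ℕ)
    (hπT : π < T)
    (honeepoch : ∀ t, j ∈ S t ↔ t = π)
    (hSGD : ∀ t, θ (t + 1) =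
      θ t - (η t / (S t).card) • ∑ i ∈ S t, gradient (ℓ (z i)) (θ t))
    (hinit : θc 0 = θ 0)
    (hCF : ∀ t, θc (t + 1) =
      θc t - (η t / (S t).card) • ∑ i ∈ (S t).erase j, gradient (ℓ (z i)) (θc t)) :
    (η π / (S π).card) * (∏ s ∈ Finset.Ioo π T, (1 - η s * Lam)) *
        ‖gradient (ℓ (z j)) (θ π)‖ ≤ ‖θc T - θ T‖ ∧
    ‖θc T - θ T‖ ≤
      (η π / (S π).card) * (∏ s ∈ Finset.Ioo π T, (1 - η s * lam)) *
        ‖gradient (ℓ (z j)) (θ π)‖ :=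
  sgd_influence_norm_bound_general ℓ lam Lam hlamLam hsmooth hHess N T z S η hS hη θ θc j π hπT
    honeepoch hSGD hinit hCF
end

section
/- Under the assumptions of the convex setting ($\lambda I \prec \nabla_\theta^2\ell \prec \Lambda I$, $\eta_s \le 1/\Lambda$), the estimator $\Delta\theta_{-j} = \frac{\eta_{\pi(j)}}{|S_{\pi(j)}|} Z_{T-1}\cdots Z_{\pi(j)+1}\, g(z_j;\theta^{[\pi(j)]})$ with $Z_s = I - \eta_s H^{[s]}$ satisfies $h_j(\Lambda) \le \|\Delta\theta_{-j}\| \le h_j(\lambda)$, where $h_j(a) = \frac{\eta_{\pi(j)}}{|S_{\pi(j)}|}\prod_{s=\pi(j)+1}^{T-1}(1-\eta_s a)\,\|g(z_j;\theta^{[\pi(j)]})\|$. -/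
/-!
Each step multiplies the estimator by `Z_s = I - η_s H^{[s]}`. The mini-batch Hessian `H^{[s]}`
is symmetric (Schwarz) with quadratic form between `λ‖v‖²` and `Λ‖v‖²`, so `Z_s` is symmetric
with quadratic form between `(1 - η_s Λ)‖v‖² ≥ 0` and `(1 - η_s λ)‖v‖²`. Cauchy–Schwarz applied
to `⟪v, Z_s v⟫` gives `‖Z_s v‖ ≥ (1 - η_s Λ)‖v‖`, and since the norm of a symmetric operator is
the supremum of its Rayleigh quotient, `‖Z_s v‖ ≤ (1 - η_s λ)‖v‖`. Multiplying these one-step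
bounds along `s = π(j)+1, …, T-1`, starting from `Δ_{π(j)+1} = (η_{π(j)}/|S_{π(j)}|) g`, gives
the claim.
-/

open scoped RealInnerProductSpace
open Finset

open scoped BigOperators

section

variable {α : Type*} [CommSemiring α] [PartialOrder α] [IsOrderedRing α] {u r : ℕ → α}
  {a b : ℕ}

theorem Finset.le_mul_prod_Ico_of_le_mul (hab : a ≤ b) (hr : ∀ s ∈ Ico a b, 0 ≤ r s)
    (h : ∀ s ∈ Ico a b, u (s + 1) ≤ r s * u s) : u b ≤ u a * ∏ s ∈ Ico a b, r s := by
  induction b, hab using Nat.le_induction with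
  | base => simp
  | succ n han ih =>
    have hn : n ∈ Ico a (n + 1) := mem_Ico.mpr ⟨han, n.lt_succ_self⟩
    have hsub : Ico a n ⊆ Ico a (n + 1) := Ico_subset_Ico_right n.le_succ
    calc u (n + 1) ≤ r n * u n := h n hn
      _ ≤ r n * (u a * ∏ s ∈ Ico a n, r s) :=
        mul_le_mul_of_nonneg_left (ih (fun s hs ↦ hr s (hsub hs)) fun s hs ↦ h s (hsub hs))
          (hr n hn)
      _ = u a * ∏ s ∈ Ico a (n + 1), r s := by rw [prod_Ico_succ_top han]; ring

theorem Finset.mul_prod_Ico_le_of_mul_le (hab : a ≤ b) (hr : ∀ s ∈ Ico a b, 0 ≤ r s)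
    (h : ∀ s ∈ Ico a b, r s * u s ≤ u (s + 1)) : u a * ∏ s ∈ Ico a b, r s ≤ u b := by
  induction b, hab using Nat.le_induction with
  | base => simp
  | succ n han ih =>
    have hn : n ∈ Ico a (n + 1) := mem_Ico.mpr ⟨han, n.lt_succ_self⟩
    have hsub : Ico a n ⊆ Ico a (n + 1) := Ico_subset_Ico_right n.le_succ
    calc u a * ∏ s ∈ Ico a (n + 1), r s = r n * (u a * ∏ s ∈ Ico a n, r s) := by
          rw [prod_Ico_succ_top han]; ring
      _ ≤ r n * u n :=
        mul_le_mul_of_nonneg_left (ih (fun s hs ↦ hr s (hsub hs)) fun s hs ↦ h s (hsub hs))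
          (hr n hn)
      _ ≤ u (n + 1) := h n hn

end

section

variable {E : Type*} [NormedAddCommGroup E] [InnerProductSpace ℝ E] {ι : Type*}

theorem inner_inv_card_smul_sum_apply (s : Finset ι) (A : ι → E →L[ℝ] E) (u w : E) :
    ⟪u, ((#s : ℝ)⁻¹ • ∑ i ∈ s, A i) w⟫ = 𝔼 i ∈ s, ⟪u, A i w⟫ := by
  rw [expect_eq_sum_div_card, smul_apply, _root_.sum_apply,
    real_inner_smul_right, inner_sum, inv_mul_eq_div]

theorem isSymmetric_inv_card_smul_sum (s : Finset ι) {A : ι → E →L[ℝ] E}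
    (hA : ∀ i ∈ s, (A i).IsSymmetric) :
    ((#s : ℝ)⁻¹ • ∑ i ∈ s, A i).IsSymmetric := fun u w ↦ by
  simp only [ContinuousLinearMap.coe_coe]
  rw [real_inner_comm, inner_inv_card_smul_sum_apply, inner_inv_card_smul_sum_apply]
  exact expect_congr rfl fun i hi ↦ by rw [← (hA i hi).apply_clm u w, real_inner_comm]

namespace ContinuousLinearMap

theorem opNorm_le_of_abs_inner_le {T : E →L[ℝ] E} (hT : T.IsSymmetric) {M : ℝ} (hM : 0 ≤ M)
    (h : ∀ x, |⟪x, T x⟫| ≤ M * ‖x‖ ^ 2) : ‖T‖ ≤ M := by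
  rw [T.norm_eq_iSup_rayleighQuotient hT]
  refine ciSup_le fun x ↦ ?_
  rcases eq_or_ne x 0 with rfl | hx
  · simpa using hM
  · rw [rayleighQuotient, reApplyInnerSelf_apply, RCLike.re_to_real, real_inner_comm, abs_div,
      abs_sq, div_le_iff₀ (by positivity)]
    exact h x

theorem mul_norm_le_norm_sub_smul_apply {A : E →L[ℝ] E} {Lam η : ℝ} (hη : 0 ≤ η)
    (hA : ∀ v, ⟪v, A v⟫ ≤ Lam * ‖v‖ ^ 2) (v : E) :
    (1 - η * Lam) * ‖v‖ ≤ ‖v - η • A v‖ := by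
  rcases eq_or_ne v 0 with rfl | hv
  · simp
  have hquad : (1 - η * Lam) * ‖v‖ ^ 2 ≤ ⟪v, v - η • A v⟫ := by
    rw [inner_sub_right, real_inner_smul_right, real_inner_self_eq_norm_sq]
    nlinarith [hA v]
  have hpos : 0 < ‖v‖ := norm_pos_iff.mpr hv
  refine le_of_mul_le_mul_right ?_ hpos
  calc (1 - η * Lam) * ‖v‖ * ‖v‖ = (1 - η * Lam) * ‖v‖ ^ 2 := by ring
    _ ≤ ‖v‖ * ‖v - η • A v‖ := hquad.trans (real_inner_le_norm _ _)
    _ = ‖v - η • A v‖ * ‖v‖ := mul_comm _ _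

theorem norm_sub_smul_apply_le {A : E →L[ℝ] E} (hA : A.IsSymmetric) {lam Lam η : ℝ}
    (hlamLam : lam ≤ Lam) (hη : 0 ≤ η) (hηLam : η * Lam ≤ 1)
    (hlow : ∀ v, lam * ‖v‖ ^ 2 ≤ ⟪v, A v⟫) (hup : ∀ v, ⟪v, A v⟫ ≤ Lam * ‖v‖ ^ 2)
    (v : E) :
    ‖v - η • A v‖ ≤ (1 - η * lam) * ‖v‖ := by
  set P : E →L[ℝ] E := 1 - η • A
  have hP : ∀ x, P x = x - η • A x := fun x ↦ rfl
  have hPsymm : P.IsSymmetric := fun x y ↦ by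
    change ⟪P x, y⟫ = ⟪x, P y⟫
    rw [hP, hP, inner_sub_left, inner_sub_right, real_inner_smul_left, real_inner_smul_right,
      hA.apply_clm]
  have hPquad : ∀ x, |⟪x, P x⟫| ≤ (1 - η * lam) * ‖x‖ ^ 2 := fun x ↦ by
    rw [hP, inner_sub_right, real_inner_smul_right, real_inner_self_eq_norm_sq, abs_le]
    constructor <;> nlinarith [hlow x, hup x, sq_nonneg ‖x‖]
  have hM : 0 ≤ 1 - η * lam := by nlinarith
  calc ‖v - η • A v‖ = ‖P v‖ := rfl
    _ ≤ ‖P‖ * ‖v‖ := P.le_opNorm v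
    _ ≤ (1 - η * lam) * ‖v‖ := by
      gcongr
      exact opNorm_le_of_abs_inner_le hPsymm hM hPquad

end ContinuousLinearMap

end

theorem inner_hess_eq_fderiv_fderiv {p : ℕ} (f : EuclideanSpace ℝ (Fin p) → ℝ)
    (θ v w : EuclideanSpace ℝ (Fin p)) :
    ⟪hess f θ v, w⟫ = fderiv ℝ (fderiv ℝ f) θ v w := by
  have hgrad : gradient f = (InnerProductSpace.toDual ℝ _).symm ∘ fderiv ℝ f := rfl
  rw [hess, hgrad, (InnerProductSpace.toDual ℝ _).symm.comp_fderiv]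
  exact InnerProductSpace.toDual_symm_apply

theorem isSymmetric_hess {p : ℕ} {f : EuclideanSpace ℝ (Fin p) → ℝ}
    {θ : EuclideanSpace ℝ (Fin p)} (hf : ContDiffAt ℝ 2 f θ) :
    (hess f θ).IsSymmetric := fun v w ↦ by
  simp only [ContinuousLinearMap.coe_coe]
  rw [inner_hess_eq_fderiv_fderiv,
    real_inner_comm, inner_hess_eq_fderiv_fderiv, (hf.isSymmSndFDerivAt (by simp)).eq]

/-- `Δθ_{-j}` is encoded through its defining recursion `Δ (s+1) = Z_s (Δ s)` with
`Z_s = I - η_s H^{[s]}` and `H^{[s]}` the mini-batch Hessian. -/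
theorem estimator_norm_bound_general {p : ℕ} {Z : Type*}
    (ℓ : Z → EuclideanSpace ℝ (Fin p) → ℝ) (lam Lam : ℝ)
    (hlamLam : lam < Lam)
    (hsmooth : ∀ z, ContDiff ℝ 2 (ℓ z))
    (hHess : ∀ z θ₀ (v : EuclideanSpace ℝ (Fin p)), v ≠ 0 →
      lam * ‖v‖ ^ 2 < ⟪v, hess (ℓ z) θ₀ v⟫ ∧ ⟪v, hess (ℓ z) θ₀ v⟫ < Lam * ‖v‖ ^ 2)
    (N T : ℕ) (z : Fin N → Z) (S : ℕ → Finset (Fin N)) (η : ℕ → ℝ)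
    (hS : ∀ t, (S t).Nonempty)
    (hη : ∀ s, 0 < η s ∧ η s ≤ 1 / Lam)
    (θ : ℕ → EuclideanSpace ℝ (Fin p)) (j : Fin N) (π : ℕ)
    (hπT : π < T)
    (Δ : ℕ → EuclideanSpace ℝ (Fin p))
    (hΔinit : Δ (π + 1) = (η π / (S π).card) • gradient (ℓ (z j)) (θ π))
    (hΔrec : ∀ s, π < s → Δ (s + 1) =
      Δ s - η s • ((((S s).card : ℝ)⁻¹ • ∑ i ∈ S s, hess (ℓ (z i)) (θ s)) (Δ s))) :
    (η π / (S π).card) * (∏ s ∈ Finset.Ioo π T, (1 - η s * Lam)) *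
        ‖gradient (ℓ (z j)) (θ π)‖ ≤ ‖Δ T‖ ∧
    ‖Δ T‖ ≤
      (η π / (S π).card) * (∏ s ∈ Finset.Ioo π T, (1 - η s * lam)) *
        ‖gradient (ℓ (z j)) (θ π)‖ := by
  set H := fun s ↦ (#(S s) : ℝ)⁻¹ • ∑ i ∈ S s, hess (ℓ (z i)) (θ s)
  have hLam : 0 < Lam := one_div_pos.mp ((hη 0).1.trans_le (hη 0).2)
  have hηLam s : η s * Lam ≤ 1 := (le_div_iff₀ hLam).mp (hη s).2
  have hH s v : lam * ‖v‖ ^ 2 ≤ ⟪v, H s v⟫ ∧ ⟪v, H s v⟫ ≤ Lam * ‖v‖ ^ 2 := by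
    rcases eq_or_ne v 0 with rfl | hv
    · simp
    rw [inner_inv_card_smul_sum_apply]
    exact ⟨le_expect (hS s) fun i _ ↦ (hHess _ _ v hv).1.le,
      expect_le (hS s) fun i _ ↦ (hHess _ _ v hv).2.le⟩
  have hHsymm s : (H s).IsSymmetric :=
    isSymmetric_inv_card_smul_sum _ fun i _ ↦ isSymmetric_hess (hsmooth _).contDiffAt
  have hstep s (hs : s ∈ Ico (π + 1) T) :
      (1 - η s * Lam) * ‖Δ s‖ ≤ ‖Δ (s + 1)‖ ∧
        ‖Δ (s + 1)‖ ≤ (1 - η s * lam) * ‖Δ s‖ := by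
    rw [hΔrec s (mem_Ico.mp hs).1]
    exact ⟨ContinuousLinearMap.mul_norm_le_norm_sub_smul_apply (hη s).1.le
        (fun v ↦ (hH s v).2) _,
      ContinuousLinearMap.norm_sub_smul_apply_le (hHsymm s) hlamLam.le (hη s).1.le (hηLam s)
        (fun v ↦ (hH s v).1) (fun v ↦ (hH s v).2) _⟩
  have hinit : η π / #(S π) * ‖gradient (ℓ (z j)) (θ π)‖ = ‖Δ (π + 1)‖ := by
    rw [hΔinit, norm_smul, Real.norm_of_nonneg (div_nonneg (hη π).1.le (Nat.cast_nonneg _))]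
  have hlam_rate s : 0 ≤ 1 - η s * lam :=
    sub_nonneg.mpr ((mul_le_mul_of_nonneg_left hlamLam.le (hη s).1.le).trans (hηLam s))
  rw [← Finset.Ico_add_one_left_eq_Ioo, mul_right_comm _ (∏ s ∈ _, _),
    mul_right_comm _ (∏ s ∈ _, _), hinit]
  exact ⟨mul_prod_Ico_le_of_mul_le (u := fun s ↦ ‖Δ s‖) hπT
      (fun s _ ↦ sub_nonneg.mpr (hηLam s)) fun s hs ↦ (hstep s hs).1,
    le_mul_prod_Ico_of_le_mul (u := fun s ↦ ‖Δ s‖) hπT (fun s _ ↦ hlam_rate s)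
      fun s hs ↦ (hstep s hs).2⟩

/-- Lemma 1, inequality (4): two-sided bound on the norm of the estimator `Δθ_{-j}`,
which is encoded through its defining recursion `Δ (s+1) = Z_s (Δ s)` with
`Z_s = I - η_s H^{[s]}` and `H^{[s]}` the mini-batch Hessian. -/
theorem estimator_norm_bound {p : ℕ} {Z : Type*}
    (ℓ : Z → EuclideanSpace ℝ (Fin p) → ℝ) (lam Lam : ℝ)
    (hlam : 0 < lam) (hlamLam : lam < Lam)
    (hsmooth : ∀ z, ContDiff ℝ 2 (ℓ z))
    (hHess : ∀ z θ₀ (v : EuclideanSpace ℝ (Fin p)), v ≠ 0 →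
      lam * ‖v‖ ^ 2 < ⟪v, hess (ℓ z) θ₀ v⟫ ∧ ⟪v, hess (ℓ z) θ₀ v⟫ < Lam * ‖v‖ ^ 2)
    (N T : ℕ) (z : Fin N → Z) (S : ℕ → Finset (Fin N)) (η : ℕ → ℝ)
    (hS : ∀ t, (S t).Nonempty)
    (hη : ∀ s, 0 < η s ∧ η s ≤ 1 / Lam)
    (θ : ℕ → EuclideanSpace ℝ (Fin p)) (j : Fin N) (π : ℕ)
    (hπT : π < T) (hjS : j ∈ S π)
    (hSGD : ∀ t, θ (t + 1) =
      θ t - (η t / (S t).card) • ∑ i ∈ S t, gradient (ℓ (z i)) (θ t))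
    (Δ : ℕ → EuclideanSpace ℝ (Fin p))
    (hΔinit : Δ (π + 1) = (η π / (S π).card) • gradient (ℓ (z j)) (θ π))
    (hΔrec : ∀ s, π < s → Δ (s + 1) =
      Δ s - η s • ((((S s).card : ℝ)⁻¹ • ∑ i ∈ S s, hess (ℓ (z i)) (θ s)) (Δ s))) :
    (η π / (S π).card) * (∏ s ∈ Finset.Ioo π T, (1 - η s * Lam)) *
        ‖gradient (ℓ (z j)) (θ π)‖ ≤ ‖Δ T‖ ∧
    ‖Δ T‖ ≤
      (η π / (S π).card) * (∏ s ∈ Finset.Ioo π T, (1 - η s * lam)) *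
        ‖gradient (ℓ (z j)) (θ π)‖ :=
  estimator_norm_bound_general ℓ lam Lam hlamLam hsmooth hHess N T z S η hS hη θ j π hπT Δ hΔinit
    hΔrec
end
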